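/- There exist constants C > 0 and L₀ > r₀ such that for every L ≥ L₀, every triple of distinct indices i, j, k, every sign μ ∈ {+,−}, every |t| ≤ L, and every point of the segment C^{(k)}_t ∩ F^{(i)}_{μ,L}, | κ^{(k)} − μ·( (1/2)·g_{jj,i} − g_{ij,j} ) | ≤ C·L^{−2τ−1}. (The geodesic curvature of the slicing curve on the face x^i = μL equals μ((1/2)g_{jj,i} − g_{ij,j}) up to O(L^{−2τ−1}).) -/

import Mathlib

open Real MeasureTheory

noncomputable section

/-- Points of ℝ³. -/
abbrev Pt : Type := Fin 3 → ℝ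

/-- The Euclidean norm |x| on ℝ³. -/
def enorm3 (x : Pt) : ℝ := Real.sqrt (∑ i, x i ^ 2)

/-- The sign μ ∈ {+,-} as a real number. -/
def sgn (μ : Bool) : ℝ := if μ then 1 else -1

/-- The smaller of the two indices different from `i`. -/
def lo (i : Fin 3) : Fin 3 := if i = 0 then 1 else 0

/-- The larger of the two indices different from `i`. -/
def hi (i : Fin 3) : Fin 3 := if i = 2 then 1 else 2

/-- The index different from both `i` and `a` (when `i ≠ a`). -/
def oth (i a : Fin 3) : Fin 3 := -(i + a)

/-- The partial derivative ∂ₖ g_{ij}. -/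
def dg (g : Pt → Matrix (Fin 3) (Fin 3) ℝ) (i j k : Fin 3) (x : Pt) : ℝ :=
  fderiv ℝ (fun y => g y i j) x (Pi.single k 1)

/-- The second partial derivative ∂ₗ ∂ₖ g_{ij}. -/
def ddg (g : Pt → Matrix (Fin 3) (Fin 3) ℝ) (i j k l : Fin 3) (x : Pt) : ℝ :=
  fderiv ℝ (dg g i j k) x (Pi.single l 1)

/-- The Christoffel symbols Γ^m_{ab} of the metric g. -/
def chris (g : Pt → Matrix (Fin 3) (Fin 3) ℝ) (m a b : Fin 3) (x : Pt) : ℝ :=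
  (1/2) * ∑ n, (g x)⁻¹ m n * (dg g n a b x + dg g n b a x - dg g a b n x)

/-- The asymptotic flatness hypotheses: on U = {|x| > r₀}, g is a symmetric
positive-definite C² matrix field with |g_{ij} - δ_{ij}| ≤ C₀|x|^{-τ},
|∂g| ≤ C₀|x|^{-τ-1}, |∂∂g| ≤ C₀|x|^{-τ-2}. -/
def AsymptFlat (τ r₀ C₀ : ℝ) (g : Pt → Matrix (Fin 3) (Fin 3) ℝ) : Prop :=
  (∀ x : Pt, r₀ < enorm3 x → (g x).IsSymm) ∧
  (∀ x : Pt, r₀ < enorm3 x → (g x).PosDef) ∧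
  (∀ i j : Fin 3, ContDiffOn ℝ 2 (fun x => g x i j) {x : Pt | r₀ < enorm3 x}) ∧
  (∀ x : Pt, r₀ < enorm3 x → ∀ i j : Fin 3,
    |g x i j - if i = j then 1 else 0| ≤ C₀ * enorm3 x ^ (-τ)) ∧
  (∀ x : Pt, r₀ < enorm3 x → ∀ i j k : Fin 3,
    |dg g i j k x| ≤ C₀ * enorm3 x ^ (-τ - 1)) ∧
  (∀ x : Pt, r₀ < enorm3 x → ∀ i j k l : Fin 3,
    |ddg g i j k l x| ≤ C₀ * enorm3 x ^ (-τ - 2))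

/-- The point of the face x^i = a with the two remaining coordinates
(in increasing order of index) equal to s and u. -/
def facePt (i : Fin 3) (a s u : ℝ) : Pt :=
  fun m => if m = i then a else if m = lo i then s else u

/-- The point of the edge x^i = a, x^j = b (i ≠ j) with remaining coordinate t. -/
def edgePt (i j : Fin 3) (a b t : ℝ) : Pt :=
  fun m => if m = i then a else if m = j then b else t

/-- ∫_{F^{(i)}_{μ,L}} f dσ₀ : the integral of f over the face F^{(i)}_{μ,L} of
∂Cube_L with respect to 2-dimensional Lebesgue measure. -/
def faceInt (i : Fin 3) (μ : Bool) (L : ℝ) (f : Pt → ℝ) : ℝ :=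
  ∫ s in (-L)..L, ∫ u in (-L)..L, f (facePt i (sgn μ * L) s u)

/-- det h, where h is the 2×2 submatrix of g obtained by deleting row and column i. -/
def hdet (g : Pt → Matrix (Fin 3) (Fin 3) ℝ) (i : Fin 3) (x : Pt) : ℝ :=
  g x (lo i) (lo i) * g x (hi i) (hi i) - g x (lo i) (hi i) * g x (hi i) (lo i)

/-- The area density √(det h) of dσ_g on the face with normal direction i. -/
def areaDens (g : Pt → Matrix (Fin 3) (Fin 3) ℝ) (i : Fin 3) (x : Pt) : ℝ :=
  Real.sqrt (hdet g i x)

/-- The entries (h⁻¹)^{ab} of the inverse of the 2×2 submatrix h of g obtained by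
deleting row and column i (meaningful for a, b ≠ i). -/
def hinv (g : Pt → Matrix (Fin 3) (Fin 3) ℝ) (i a b : Fin 3) (x : Pt) : ℝ :=
  (if a = b then g x (oth i a) (oth i a) else -(g x a b)) / hdet g i x

/-- The components ν^m = μ g^{mi}/√(g^{ii}) of the outward g-unit normal of the
face x^i = μL. -/
def nuc (g : Pt → Matrix (Fin 3) (Fin 3) ℝ) (i : Fin 3) (μ : Bool) (m : Fin 3) (x : Pt) : ℝ :=
  sgn μ * (g x)⁻¹ m i / Real.sqrt ((g x)⁻¹ i i)

/-- The mean curvature H = -Σ_{a,b≠i} (h⁻¹)^{ab} Σ_{m,n} Γ^m_{ab} g_{mn} ν^n of the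
face F^{(i)}_{μ,L} with respect to the outward unit normal ν. -/
def meanCurv (g : Pt → Matrix (Fin 3) (Fin 3) ℝ) (i : Fin 3) (μ : Bool) (x : Pt) : ℝ :=
  -∑ a, ∑ b, (if a = i ∨ b = i then 0 else
    hinv g i a b x * ∑ m, ∑ n, chris g m a b x * g x m n * nuc g i μ n x)

/-- The integrand Σ_{j,k}(g_{jk,j} - g_{jj,k}) ν^k of the ADM mass surface integral. -/
def admIntegrand (g : Pt → Matrix (Fin 3) (Fin 3) ℝ) (i : Fin 3) (μ : Bool) (x : Pt) : ℝ :=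
  ∑ j, ∑ k, (dg g j k j x - dg g j j k x) * nuc g i μ k x

/-- B(L): the ADM mass surface integral of g over ∂Cube_L. -/
def ADM (g : Pt → Matrix (Fin 3) (Fin 3) ℝ) (L : ℝ) : ℝ :=
  (1/(16*π)) * ∑ i, ∑ μ : Bool,
    faceInt i μ L (fun x => admIntegrand g i μ x * areaDens g i x)

/-- The angle θ^{(ij)}_{μ,λ} = arccos(μλ g^{ij}/√(g^{ii} g^{jj})) between the outward
unit normals of the two faces adjacent along the edge E^{(ij)}_{μ,λ,L}. -/
def thetaAngle (g : Pt → Matrix (Fin 3) (Fin 3) ℝ) (i j : Fin 3) (μ lam : Bool) (x : Pt) : ℝ :=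
  Real.arccos (sgn μ * sgn lam * (g x)⁻¹ i j / Real.sqrt ((g x)⁻¹ i i * (g x)⁻¹ j j))

/-- ∫_{E^{(ij)}_{μ,λ,L}} f ds_g : the integral of f over the edge x^i = μL, x^j = λL
of ∂Cube_L, with arclength element ds_g = √(g_{cc}) dt, c being the remaining index. -/
def edgeInt (g : Pt → Matrix (Fin 3) (Fin 3) ℝ) (i j : Fin 3) (μ lam : Bool) (L : ℝ)
    (f : Pt → ℝ) : ℝ :=
  ∫ t in (-L)..L, f (edgePt i j (sgn μ * L) (sgn lam * L) t) *
    Real.sqrt (g (edgePt i j (sgn μ * L) (sgn lam * L) t) (oth i j) (oth i j))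

/-- The components of the outward g-unit normal ν̄ of the slicing curve C^{(k)}_t
within the plane x^k = t, along its segment lying in the face x^i = μL:
ν̄^a = μ (h⁻¹)^{ai}/√((h⁻¹)^{ii}) for a ≠ k, ν̄^k = 0, h being the 2×2 submatrix
of g deleting row and column k. -/
def nubar (g : Pt → Matrix (Fin 3) (Fin 3) ℝ) (i k : Fin 3) (μ : Bool) (n : Fin 3)
    (x : Pt) : ℝ :=
  if n = k then 0 else sgn μ * hinv g k n i x / Real.sqrt (hinv g k i i x)

/-- The geodesic curvature κ^{(k)} = -(1/g_{jj}) Σ_{m,n} Γ^m_{jj} g_{mn} ν̄^n of the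
slicing curve C^{(k)}_t within the plane x^k = t, along its segment lying in the face
x^i = μL; here j = oth i k is the tangent coordinate direction. -/
def geodCurv (g : Pt → Matrix (Fin 3) (Fin 3) ℝ) (i k : Fin 3) (μ : Bool) (x : Pt) : ℝ :=
  -(1 / g x (oth i k) (oth i k)) *
    ∑ m, ∑ n, chris g m (oth i k) (oth i k) x * g x m n * nubar g i k μ n x

/-- ∫_{C^{(k)}_t} κ^{(k)} ds_g : the integral of the geodesic curvature of the slicing
curve C^{(k)}_t = ∂Cube_L ∩ {x^k = t}, as the sum over its four segments. -/
def curveCurvInt (g : Pt → Matrix (Fin 3) (Fin 3) ℝ) (k : Fin 3) (t L : ℝ) : ℝ :=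
  ∑ i, ∑ μ : Bool, if i = k then 0 else
    ∫ s in (-L)..L,
      geodCurv g i k μ (edgePt i k (sgn μ * L) t s) *
        Real.sqrt (g (edgePt i k (sgn μ * L) t s) (oth i k) (oth i k))

/-- The turning angle arccos(-μλ g_{ij}/√(g_{ii} g_{jj})) of the slicing curve
C^{(k)}_t at its vertex (x^i, x^j) = (μL, λL), where {i,j} = {1,2,3} \ {k}. -/
def turnAngle (g : Pt → Matrix (Fin 3) (Fin 3) ℝ) (k : Fin 3) (μ lam : Bool)
    (t L : ℝ) : ℝ :=
  Real.arccos (-(sgn μ * sgn lam) *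
      g (edgePt (lo k) (hi k) (sgn μ * L) (sgn lam * L) t) (lo k) (hi k) /
    Real.sqrt (g (edgePt (lo k) (hi k) (sgn μ * L) (sgn lam * L) t) (lo k) (lo k) *
               g (edgePt (lo k) (hi k) (sgn μ * L) (sgn lam * L) t) (hi k) (hi k)))

/-- β^{⟨k⟩}_t : the sum of the four turning angles of the slicing curve C^{(k)}_t. -/
def betaSum (g : Pt → Matrix (Fin 3) (Fin 3) ℝ) (k : Fin 3) (t L : ℝ) : ℝ :=
  ∑ μ : Bool, ∑ lam : Bool, turnAngle g k μ lam t L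

/-- The g-Laplacian Δ_g x^k = -Σ_{a,b} g^{ab} Γ^k_{ab} of the coordinate function x^k. -/
def lapCoord (g : Pt → Matrix (Fin 3) (Fin 3) ℝ) (k : Fin 3) (x : Pt) : ℝ :=
  -∑ a, ∑ b, (g x)⁻¹ a b * chris g k a b x

/-- The directional derivative ∂_m √(g^{kk}) of |∇x^k| = √(g^{kk}). -/
def dlenGrad (g : Pt → Matrix (Fin 3) (Fin 3) ℝ) (k m : Fin 3) (x : Pt) : ℝ :=
  fderiv ℝ (fun y => Real.sqrt ((g y)⁻¹ k k)) x (Pi.single m 1)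

/-! Near infinity `g = I + O(ε)` and `∂g = O(D)`, with `ε = C₀ L^{-τ}` and `D = C₀ L^{-τ-1}`.
Every term of `κ = -(1/g_jj) Γ^m_{jj} g_{mn} ν̄^n` carries a factor `∂g`, so replacing `g⁻¹` by
`I` in `Γ`, `g_{mn}` and `g_jj` by `δ_{mn}` and `1`, and `ν̄` by `μ e_i` costs only `O(εD)`, and
leaves `-μ Γ_{ijj} = μ(½ g_{jj,i} - g_{ij,j})`. Finally `εD = C₀² L^{-2τ-1}`. -/

open Matrix

-- The ℓ∞ operator norm on matrices is the operator norm for the sup norm on `Pt = Fin 3 → ℝ`.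
attribute [local instance] Matrix.linftyOpSeminormedAddCommGroup
  Matrix.linftyOpNormedAddCommGroup Matrix.linftyOpNormedRing

namespace Matrix

section

variable {m n α : Type*} [Fintype m] [Fintype n]

theorem norm_apply_le_linfty_opNorm [SeminormedAddCommGroup α] (A : Matrix m n α) (i : m)
    (j : n) : ‖A i j‖ ≤ ‖A‖ :=
  (PiLp.norm_apply_le (WithLp.toLp 1 (A i)) j).trans
    (norm_le_pi_norm (fun i => WithLp.toLp 1 (A i)) i)

theorem linfty_opNorm_le_of_forall_norm_apply_le [SeminormedAddCommGroup α] {A : Matrix m n α}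
    {ε : ℝ} (hε : 0 ≤ ε) (h : ∀ i j, ‖A i j‖ ≤ ε) : ‖A‖ ≤ Fintype.card n * ε := by
  change ‖fun i => WithLp.toLp 1 (A i)‖ ≤ _
  refine (pi_norm_le_iff_of_nonneg (by positivity)).2 fun i => ?_
  rw [PiLp.norm_eq_of_L1]
  simpa using Finset.sum_le_sum fun j (_ : j ∈ Finset.univ) => h i j

theorem norm_dotProduct_le [SeminormedRing α] (u v : n → α) :
    ‖u ⬝ᵥ v‖ ≤ Fintype.card n * (‖u‖ * ‖v‖) := by
  calc ‖u ⬝ᵥ v‖ ≤ ∑ i, ‖u i * v i‖ := norm_sum_le _ _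
    _ ≤ ∑ _i : n, ‖u‖ * ‖v‖ := Finset.sum_le_sum fun i _ =>
        (norm_mul_le _ _).trans (mul_le_mul (norm_le_pi_norm u i) (norm_le_pi_norm v i)
          (norm_nonneg _) (norm_nonneg _))
    _ = _ := by simp

end

variable {n : Type*} [Fintype n] [DecidableEq n]

theorem abs_apply_sub_one_apply_le (A : Matrix n n ℝ) (a b : n) :
    |A a b - if a = b then 1 else 0| ≤ ‖A - 1‖ := by
  have h := norm_apply_le_linfty_opNorm (A - 1) a b
  rwa [sub_apply, one_apply, Real.norm_eq_abs] at h

variable {𝕜 : Type*} [NormedField 𝕜]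

theorem isUnit_det_of_norm_sub_one_lt_one {A : Matrix n n 𝕜} (h : ‖A - 1‖ < 1) :
    IsUnit A.det := by
  refine isUnit_iff_ne_zero.2 fun hdet => ?_
  obtain ⟨v, hv, hAv⟩ := exists_mulVec_eq_zero_iff.2 hdet
  have hv' : v = -((A - 1) *ᵥ v) := by simp [sub_mulVec, hAv]
  have key : ‖v‖ ≤ ‖A - 1‖ * ‖v‖ := by
    conv_lhs => rw [hv']
    rw [norm_neg]; exact linfty_opNorm_mulVec _ _
  nlinarith [norm_pos_iff.2 hv]

theorem norm_inv_sub_one_le {A : Matrix n n 𝕜} (h : ‖A - 1‖ < 1) :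
    ‖A⁻¹ - 1‖ ≤ ‖A - 1‖ / (1 - ‖A - 1‖) := by
  have hinv : A⁻¹ - 1 = -((A⁻¹ - 1) * (A - 1)) - (A - 1) := by
    have hAA := nonsing_inv_mul A (isUnit_det_of_norm_sub_one_lt_one h)
    simp only [sub_mul, mul_sub, hAA, mul_one, one_mul]; abel
  have key : ‖A⁻¹ - 1‖ ≤ ‖A⁻¹ - 1‖ * ‖A - 1‖ + ‖A - 1‖ := by
    conv_lhs => rw [hinv]
    exact (norm_sub_le _ _).trans (by rw [norm_neg]; gcongr; exact norm_mul_le _ _)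
  rw [le_div_iff₀ (by linarith)]
  nlinarith

end Matrix

theorem abs_mul_sub_mul_sub_one_le {a b c d δ : ℝ} (hδ : δ ≤ 1 / 2) (ha : |a - 1| ≤ δ)
    (hb : |b - 1| ≤ δ) (hc : |c| ≤ δ) (hd : |d| ≤ δ) : |a * b - c * d - 1| ≤ 3 * δ := by
  have hab : |(a - 1) * (b - 1)| ≤ δ * δ := by
    rw [abs_mul]; exact mul_le_mul ha hb (abs_nonneg _) ((abs_nonneg _).trans ha)
  have hcd : |c * d| ≤ δ * δ := by
    rw [abs_mul]; exact mul_le_mul hc hd (abs_nonneg _) ((abs_nonneg _).trans hc)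
  have hδ0 : 0 ≤ δ := (abs_nonneg _).trans ha
  rw [abs_le] at *
  constructor <;> nlinarith

theorem abs_sqrt_sub_one_le {q : ℝ} (hq : 0 ≤ q) : |√q - 1| ≤ |q - 1| := by
  have h : q - 1 = (√q - 1) * (√q + 1) := by linear_combination -(Real.sq_sqrt hq)
  rw [h, abs_mul, abs_of_pos (by positivity : 0 < √q + 1)]
  exact le_mul_of_one_le_right (abs_nonneg _) (by linarith [Real.sqrt_nonneg q])

theorem abs_apply_le_enorm3 (x : Pt) (i : Fin 3) : |x i| ≤ enorm3 x :=
  Real.abs_le_sqrt (Finset.single_le_sum (f := fun m => x m ^ 2)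
    (fun m _ => sq_nonneg (x m)) (Finset.mem_univ i))

theorem abs_sgn (μ : Bool) : |sgn μ| = 1 := by cases μ <;> simp [sgn]

theorem lo_ne_hi : ∀ k : Fin 3, lo k ≠ hi k := by decide

theorem oth_eq_of_ne : ∀ i j k : Fin 3, i ≠ j → i ≠ k → j ≠ k → oth k i = j ∧ oth i k = j := by
  decide

theorem le_enorm3_edgePt (i k : Fin 3) (μ : Bool) (t s : ℝ) {L : ℝ} (hL : 0 ≤ L) :
    L ≤ enorm3 (edgePt i k (sgn μ * L) t s) := by
  simpa [edgePt, abs_mul, abs_sgn, abs_of_nonneg hL] using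
    abs_apply_le_enorm3 (edgePt i k (sgn μ * L) t s) i

theorem fin3_eq_or_eq_or_eq : ∀ i j k n : Fin 3, i ≠ j → i ≠ k → j ≠ k →
    n = i ∨ n = j ∨ n = k := by
  decide

section AsymptFlat

variable {τ r₀ C₀ L : ℝ} {g : Pt → Matrix (Fin 3) (Fin 3) ℝ} {x : Pt}

theorem AsymptFlat.norm_sub_one_le (hg : AsymptFlat τ r₀ C₀ g) (hτ : 0 ≤ τ) (hC₀ : 0 ≤ C₀)
    (hrL : r₀ < L) (hL : 0 < L) (hLx : L ≤ enorm3 x) : ‖g x - 1‖ ≤ 3 * (C₀ * L ^ (-τ)) := by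
  refine (linfty_opNorm_le_of_forall_norm_apply_le (ε := C₀ * L ^ (-τ)) (by positivity)
    fun a b => ?_).trans_eq (by simp)
  obtain ⟨-, -, -, hg0, -, -⟩ := hg
  rw [Matrix.sub_apply, one_apply, Real.norm_eq_abs]
  exact (hg0 x (hrL.trans_le hLx) a b).trans
    (mul_le_mul_of_nonneg_left (Real.rpow_le_rpow_of_nonpos hL hLx (by linarith)) hC₀)

theorem AsymptFlat.abs_dg_le (hg : AsymptFlat τ r₀ C₀ g) (hτ : -1 ≤ τ) (hC₀ : 0 ≤ C₀)
    (hrL : r₀ < L) (hL : 0 < L) (hLx : L ≤ enorm3 x) (a b c : Fin 3) :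
    |dg g a b c x| ≤ C₀ * L ^ (-τ - 1) := by
  obtain ⟨-, -, -, -, hg1, -⟩ := hg
  exact (hg1 x (hrL.trans_le hLx) a b c).trans
    (mul_le_mul_of_nonneg_left (Real.rpow_le_rpow_of_nonpos hL hLx (by linarith)) hC₀)

end AsymptFlat

section Christoffel

variable {g : Pt → Matrix (Fin 3) (Fin 3) ℝ} {x : Pt} {δ D : ℝ}

/-- Twice the Christoffel symbols of the first kind. -/
def christoffelLower (g : Pt → Matrix (Fin 3) (Fin 3) ℝ) (a b : Fin 3) (x : Pt) : Pt :=
  fun n => dg g n a b x + dg g n b a x - dg g a b n x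

theorem chris_eq_smul_mulVec (a b : Fin 3) :
    (fun m => chris g m a b x) = (1 / 2 : ℝ) • ((g x)⁻¹ *ᵥ christoffelLower g a b x) :=
  rfl

theorem norm_christoffelLower_le (hD : ∀ a b c, |dg g a b c x| ≤ D) (a b : Fin 3) :
    ‖christoffelLower g a b x‖ ≤ 3 * D := by
  refine (pi_norm_le_iff_of_nonneg (by linarith [(abs_nonneg _).trans (hD a b a)])).2 fun n => ?_
  rw [Real.norm_eq_abs, christoffelLower, sub_eq_add_neg]
  refine (abs_add_three _ _ _).trans ?_
  linarith [hD n a b, hD n b a, hD a b n, abs_neg (dg g a b n x)]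

theorem norm_chris_sub_le (hg : ‖g x - 1‖ ≤ δ) (hδ : δ ≤ 1 / 2)
    (hD : ∀ a b c, |dg g a b c x| ≤ D) (a b : Fin 3) :
    ‖(fun m => chris g m a b x) - (1 / 2 : ℝ) • christoffelLower g a b x‖ ≤ 3 * (δ * D) := by
  have hδ0 : 0 ≤ δ := (norm_nonneg _).trans hg
  have hinv : ‖(g x)⁻¹ - 1‖ ≤ 2 * δ := by
    refine (Matrix.norm_inv_sub_one_le (by linarith)).trans ?_
    rw [div_le_iff₀ (by linarith)]
    nlinarith [norm_nonneg (g x - 1)]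
  have h : (g x)⁻¹ *ᵥ christoffelLower g a b x - christoffelLower g a b x =
      ((g x)⁻¹ - 1) *ᵥ christoffelLower g a b x := by
    rw [sub_mulVec, one_mulVec]
  rw [chris_eq_smul_mulVec, ← smul_sub, h, norm_smul, Real.norm_eq_abs,
    abs_of_pos (by norm_num : (0 : ℝ) < 1 / 2)]
  nlinarith [linfty_opNorm_mulVec ((g x)⁻¹ - 1) (christoffelLower g a b x),
    mul_le_mul hinv (norm_christoffelLower_le hD a b) (norm_nonneg _) (by positivity)]

end Christoffel

section Normal

variable {g : Pt → Matrix (Fin 3) (Fin 3) ℝ} {x : Pt} {δ : ℝ} {i j k : Fin 3}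

theorem abs_hdet_sub_one_le (k : Fin 3) (hg : ‖g x - 1‖ ≤ δ) (hδ : δ ≤ 1 / 2) :
    |hdet g k x - 1| ≤ 3 * δ := by
  have hentry := fun a b => (abs_apply_sub_one_apply_le (g x) a b).trans hg
  have hlh := lo_ne_hi k
  refine abs_mul_sub_mul_sub_one_le hδ ?_ ?_ ?_ ?_
  · simpa using hentry (lo k) (lo k)
  · simpa using hentry (hi k) (hi k)
  · simpa [hlh] using hentry (lo k) (hi k)
  · simpa [hlh.symm] using hentry (hi k) (lo k)

theorem abs_hinv_sub_one_le (hij : i ≠ j) (hik : i ≠ k) (hjk : j ≠ k) (hg : ‖g x - 1‖ ≤ δ)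
    (hδ : δ ≤ 1 / 10) : |hinv g k i i x - 1| ≤ 6 * δ := by
  have hd := abs_le.1 (abs_hdet_sub_one_le k hg (by linarith))
  have hjj : |g x j j - 1| ≤ δ := by simpa using (abs_apply_sub_one_apply_le (g x) j j).trans hg
  have hpos : 0 < hdet g k x := by linarith
  have hq : hinv g k i i x - 1 = (g x j j - hdet g k x) / hdet g k x := by
    rw [hinv, if_pos rfl, (oth_eq_of_ne i j k hij hik hjk).1]; field_simp
  rw [hq, abs_div, abs_of_pos hpos, div_le_iff₀ hpos, abs_le]
  rw [abs_le] at hjj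
  constructor <;> nlinarith

theorem abs_hinv_of_ne_le (hij : i ≠ j) (hg : ‖g x - 1‖ ≤ δ) (hδ : δ ≤ 1 / 10) :
    |hinv g k j i x| ≤ 2 * δ := by
  have hd := abs_le.1 (abs_hdet_sub_one_le k hg (by linarith))
  have hji : |g x j i| ≤ δ := by
    simpa [hij.symm] using (abs_apply_sub_one_apply_le (g x) j i).trans hg
  have hpos : 0 < hdet g k x := by linarith
  rw [hinv, if_neg hij.symm, abs_div, abs_neg, abs_of_pos hpos, div_le_iff₀ hpos]
  nlinarith [abs_nonneg (g x j i)]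

theorem norm_nubar_sub_single_le (hij : i ≠ j) (hik : i ≠ k) (hjk : j ≠ k) (μ : Bool)
    (hg : ‖g x - 1‖ ≤ δ) (hδ : δ ≤ 1 / 10) :
    ‖(fun n => nubar g i k μ n x) - Pi.single i (sgn μ)‖ ≤ 6 * δ := by
  have hq := abs_hinv_sub_one_le hij hik hjk hg hδ
  have hp := abs_hinv_of_ne_le (k := k) hij hg hδ
  have hδ0 : 0 ≤ δ := (norm_nonneg _).trans hg
  have hq0 : 0 ≤ hinv g k i i x := by linarith [(abs_le.1 hq).1]
  have hsqrt : 1 / 2 ≤ √(hinv g k i i x) :=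
    (Real.le_sqrt (by norm_num) hq0).2 (by linarith [(abs_le.1 hq).1])
  refine (pi_norm_le_iff_of_nonneg (by positivity)).2 fun n => ?_
  rw [Pi.sub_apply, Real.norm_eq_abs]
  rcases fin3_eq_or_eq_or_eq i j k n hij hik hjk with rfl | rfl | rfl
  · rw [nubar, if_neg hik, Pi.single_eq_same, mul_div_assoc, Real.div_sqrt, ← mul_sub_one,
      abs_mul, abs_sgn, one_mul]
    exact (abs_sqrt_sub_one_le hq0).trans hq
  · rw [nubar, if_neg hjk, Pi.single_eq_of_ne hij.symm, sub_zero, abs_div, abs_mul, abs_sgn,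
      one_mul, abs_of_pos (show 0 < √(hinv g k i i x) by linarith), div_le_iff₀ (by linarith)]
    nlinarith
  · rw [nubar, if_pos rfl, Pi.single_eq_of_ne hik.symm, sub_zero, abs_zero]
    positivity

theorem norm_mulVec_nubar_sub_single_le (hij : i ≠ j) (hik : i ≠ k) (hjk : j ≠ k) (μ : Bool)
    (hg : ‖g x - 1‖ ≤ δ) (hδ : δ ≤ 1 / 10) :
    ‖g x *ᵥ (fun n => nubar g i k μ n x) - Pi.single i (sgn μ)‖ ≤ 8 * δ := by
  set ν : Pt := fun n => nubar g i k μ n x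
  set e : Pt := Pi.single i (sgn μ)
  have hν := norm_nubar_sub_single_le hij hik hjk μ hg hδ
  have he : ‖e‖ = 1 := by rw [Pi.norm_single, Real.norm_eq_abs, abs_sgn]
  have hνb : ‖ν‖ ≤ 2 := by linarith [norm_le_norm_add_norm_sub' ν e]
  have h : g x *ᵥ ν - e = (g x - 1) *ᵥ ν + (ν - e) := by rw [sub_mulVec, one_mulVec]; abel
  rw [h]
  refine (norm_add_le _ _).trans ?_
  nlinarith [linfty_opNorm_mulVec (g x - 1) ν, norm_nonneg ν, norm_nonneg (g x - 1)]

end Normal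

section GeodesicCurvature

variable {g : Pt → Matrix (Fin 3) (Fin 3) ℝ} {x : Pt} {δ D : ℝ} {i j k : Fin 3}

theorem geodCurv_eq_dotProduct (hij : i ≠ j) (hik : i ≠ k) (hjk : j ≠ k) (μ : Bool) :
    geodCurv g i k μ x =
      -((fun m => chris g m j j x) ⬝ᵥ (g x *ᵥ fun n => nubar g i k μ n x)) / g x j j := by
  have h : ∑ m, ∑ n, chris g m j j x * g x m n * nubar g i k μ n x =
      (fun m => chris g m j j x) ⬝ᵥ (g x *ᵥ fun n => nubar g i k μ n x) := by
    simp only [dotProduct, mulVec, Finset.mul_sum, mul_assoc]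
  rw [geodCurv, (oth_eq_of_ne i j k hij hik hjk).2, h]
  ring

theorem abs_dotProduct_chris_mulVec_nubar_sub_le (hij : i ≠ j) (hik : i ≠ k) (hjk : j ≠ k)
    (μ : Bool) (hg : ‖g x - 1‖ ≤ δ) (hδ : δ ≤ 1 / 10) (hD : ∀ a b c, |dg g a b c x| ≤ D) :
    |(fun m => chris g m j j x) ⬝ᵥ (g x *ᵥ fun n => nubar g i k μ n x) -
      sgn μ * (dg g i j j x - 1 / 2 * dg g j j i x)| ≤ 75 * (δ * D) := by
  set Γ : Pt := fun m => chris g m j j x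
  set w := christoffelLower g j j x
  set V := g x *ᵥ fun n => nubar g i k μ n x
  have hδ0 : 0 ≤ δ := (norm_nonneg _).trans hg
  have hD0 : 0 ≤ D := (abs_nonneg _).trans (hD 0 0 0)
  have hΓw := norm_chris_sub_le hg (by linarith) hD j j
  have hΓ : ‖Γ‖ ≤ 3 * D := by
    have := norm_le_norm_add_norm_sub' Γ ((1 / 2 : ℝ) • w)
    rw [norm_smul, Real.norm_eq_abs, abs_of_pos (by norm_num : (0 : ℝ) < 1 / 2)] at this
    nlinarith [norm_christoffelLower_le hD j j, mul_le_mul_of_nonneg_right hδ hD0]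
  have hΓi : |Γ i - (dg g i j j x - 1 / 2 * dg g j j i x)| ≤ 3 * (δ * D) := by
    have := norm_le_pi_norm (Γ - (1 / 2 : ℝ) • w) i
    rw [Pi.sub_apply, Pi.smul_apply, smul_eq_mul, Real.norm_eq_abs] at this
    have hwi : 1 / 2 * w i = dg g i j j x - 1 / 2 * dg g j j i x := by
      simp only [w, christoffelLower]; ring
    rw [hwi] at this
    exact this.trans hΓw
  have hV : |Γ ⬝ᵥ V - sgn μ * Γ i| ≤ 72 * (δ * D) := by
    have h : Γ ⬝ᵥ V - sgn μ * Γ i = Γ ⬝ᵥ (V - Pi.single i (sgn μ)) := by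
      rw [dotProduct_sub, dotProduct_single]; ring
    rw [h, ← Real.norm_eq_abs]
    refine (Matrix.norm_dotProduct_le _ _).trans ?_
    rw [Fintype.card_fin, Nat.cast_ofNat]
    nlinarith [mul_le_mul hΓ (norm_mulVec_nubar_sub_single_le hij hik hjk μ hg hδ)
      (norm_nonneg _) (by positivity)]
  have h : Γ ⬝ᵥ V - sgn μ * (dg g i j j x - 1 / 2 * dg g j j i x) =
      (Γ ⬝ᵥ V - sgn μ * Γ i) + sgn μ * (Γ i - (dg g i j j x - 1 / 2 * dg g j j i x)) := by ring
  rw [h]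
  refine (abs_add_le _ _).trans ?_
  rw [abs_mul, abs_sgn, one_mul]
  linarith

theorem abs_geodCurv_sub_le (hij : i ≠ j) (hik : i ≠ k) (hjk : j ≠ k) (μ : Bool)
    (hg : ‖g x - 1‖ ≤ δ) (hδ : δ ≤ 1 / 10) (hD : ∀ a b c, |dg g a b c x| ≤ D) :
    |geodCurv g i k μ x - sgn μ * (1 / 2 * dg g j j i x - dg g i j j x)| ≤ 100 * (δ * D) := by
  have hS := abs_dotProduct_chris_mulVec_nubar_sub_le hij hik hjk μ hg hδ hD
  rw [geodCurv_eq_dotProduct hij hik hjk]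
  set S := (fun m => chris g m j j x) ⬝ᵥ (g x *ᵥ fun n => nubar g i k μ n x)
  set T := dg g i j j x - 1 / 2 * dg g j j i x
  have hδ0 : 0 ≤ δ := (norm_nonneg _).trans hg
  have hD0 : 0 ≤ D := (abs_nonneg _).trans (hD 0 0 0)
  have hT : |T| ≤ 3 / 2 * D := by
    have := abs_sub (dg g i j j x) (1 / 2 * dg g j j i x)
    rw [abs_mul, abs_of_pos (by norm_num : (0 : ℝ) < 1 / 2)] at this
    linarith [hD i j j, hD j j i]
  have hjj : |g x j j - 1| ≤ δ := by simpa using (abs_apply_sub_one_apply_le (g x) j j).trans hg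
  have hpos : 0 < g x j j := by linarith [(abs_le.1 hjj).1]
  have hsplit : -S / g x j j - sgn μ * (1 / 2 * dg g j j i x - dg g i j j x) =
      (sgn μ * T * (g x j j - 1) - (S - sgn μ * T)) / g x j j := by
    field_simp
    ring
  have hTG : |sgn μ * T * (g x j j - 1)| ≤ 3 / 2 * (δ * D) := by
    rw [abs_mul, abs_mul, abs_sgn, one_mul]
    exact (mul_le_mul hT hjj (abs_nonneg _) (by positivity)).trans_eq (by ring)
  rw [hsplit, abs_div, abs_of_pos hpos, div_le_iff₀ hpos]
  nlinarith [abs_sub (sgn μ * T * (g x j j - 1)) (S - sgn μ * T), (abs_le.1 hjj).1,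
    mul_nonneg hδ0 hD0]

end GeodesicCurvature

theorem geodesic_curvature_asymptotics_general (τ r₀ C₀ : ℝ) (hτ : 1/2 < τ) (hC₀ : 0 < C₀)
    (g : Pt → Matrix (Fin 3) (Fin 3) ℝ) (hg : AsymptFlat τ r₀ C₀ g) :
    ∃ C > 0, ∃ L₀ > r₀, ∀ L ≥ L₀, ∀ i j k : Fin 3, i ≠ j → i ≠ k → j ≠ k →
      ∀ μ : Bool, ∀ t : ℝ, |t| ≤ L → ∀ s : ℝ, |s| ≤ L →
        |geodCurv g i k μ (edgePt i k (sgn μ * L) t s)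
         - sgn μ * ((1/2) * dg g j j i (edgePt i k (sgn μ * L) t s)
                    - dg g i j j (edgePt i k (sgn μ * L) t s))|
        ≤ C * L ^ (-2*τ - 1) := by
  have hτ0 : 0 < τ := by linarith
  have hsmall : ∀ᶠ L in Filter.atTop, 3 * C₀ * L ^ (-τ) ≤ 1 / 10 :=
    ((tendsto_rpow_neg_atTop hτ0).const_mul (3 * C₀)).eventually
      (ge_mem_nhds (by norm_num : 3 * C₀ * 0 < 1 / 10))
  obtain ⟨L₁, hL₁⟩ := Filter.eventually_atTop.1 (hsmall.and (Filter.eventually_gt_atTop 0))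
  refine ⟨300 * C₀ ^ 2, by positivity, max L₁ (r₀ + 1), by linarith [le_max_right L₁ (r₀ + 1)],
    fun L hL i j k hij hik hjk μ t _ s _ => ?_⟩
  obtain ⟨hε, hL0⟩ := hL₁ L (le_of_max_le_left hL)
  have hrL : r₀ < L := by linarith [le_of_max_le_right hL]
  have hLx := le_enorm3_edgePt i k μ t s hL0.le
  calc _ ≤ 100 * (3 * (C₀ * L ^ (-τ)) * (C₀ * L ^ (-τ - 1))) :=
        abs_geodCurv_sub_le hij hik hjk μ (hg.norm_sub_one_le hτ0.le hC₀.le hrL hL0 hLx)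
          (by linarith) (hg.abs_dg_le (by linarith) hC₀.le hrL hL0 hLx)
    _ = 300 * C₀ ^ 2 * (L ^ (-τ) * L ^ (-τ - 1)) := by ring
    _ = 300 * C₀ ^ 2 * L ^ (-2 * τ - 1) := by rw [← Real.rpow_add hL0]; ring_nf

/-- The geodesic curvature of the slicing curve C^{(k)}_t on the face x^i = μL
equals μ((1/2)g_{jj,i} - g_{ij,j}) up to O(L^(-2τ-1)). -/
theorem geodesic_curvature_asymptotics (τ r₀ C₀ : ℝ) (hτ : 1/2 < τ) (hr₀ : 0 < r₀) (hC₀ : 0 < C₀)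
    (g : Pt → Matrix (Fin 3) (Fin 3) ℝ) (hg : AsymptFlat τ r₀ C₀ g) :
    ∃ C > 0, ∃ L₀ > r₀, ∀ L ≥ L₀, ∀ i j k : Fin 3, i ≠ j → i ≠ k → j ≠ k →
      ∀ μ : Bool, ∀ t : ℝ, |t| ≤ L → ∀ s : ℝ, |s| ≤ L →
        |geodCurv g i k μ (edgePt i k (sgn μ * L) t s)
         - sgn μ * ((1/2) * dg g j j i (edgePt i k (sgn μ * L) t s)
                    - dg g i j j (edgePt i k (sgn μ * L) t s))|
        ≤ C * L ^ (-2*τ - 1) :=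
  geodesic_curvature_asymptotics_general τ r₀ C₀ hτ hC₀ g hg
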